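/- arXiv:0902.3624 — 2 statements merged into one kernel-verified Lean document; each statement's English description precedes it below -/
import Mathlib

section
/- Let A, B be smooth functions of (x,y) satisfying A_{xy} = -(1/8) A exp(-B/4) and B_{xy} = (1/2) exp(-B/4). Set a = B_x/2 and b = A_x/2. Then w_1 = -(1/4) a^2 - a_x and w_2 = a b + 2 b_x both satisfy ∂w_i/∂y = 0. -/
open Real Function

noncomputable def pdx (f : ℝ → ℝ → ℝ) (x y : ℝ) : ℝ := deriv (fun s => f s y) x
noncomputable def pdy (f : ℝ → ℝ → ℝ) (x y : ℝ) : ℝ := deriv (fun t => f x t) y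

lemma slice_x {f : ℝ → ℝ → ℝ} (hf : ContDiff ℝ (⊤ : ℕ∞) (uncurry f)) (y : ℝ) :
    ContDiff ℝ (⊤ : ℕ∞) (fun s => f s y) := hf.comp (contDiff_id.prodMk contDiff_const)

lemma slice_y {f : ℝ → ℝ → ℝ} (hf : ContDiff ℝ (⊤ : ℕ∞) (uncurry f)) (x : ℝ) :
    ContDiff ℝ (⊤ : ℕ∞) (fun t => f x t) := hf.comp (contDiff_const.prodMk contDiff_id)

lemma hasDerivAt_px {f : ℝ → ℝ → ℝ} (hf : ContDiff ℝ (⊤ : ℕ∞) (uncurry f)) (x y : ℝ) :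
    HasDerivAt (fun s => f s y) (fderiv ℝ (uncurry f) (x, y) (1, 0)) x := by
  have h1 : HasFDerivAt (uncurry f) (fderiv ℝ (uncurry f) (x, y)) (x, y) :=
    (hf.differentiable (by simp) (x, y)).hasFDerivAt
  have h2 : HasDerivAt (fun s : ℝ => (s, y)) ((1 : ℝ), (0 : ℝ)) x :=
    (hasDerivAt_id x).prodMk (hasDerivAt_const x y)
  exact h1.comp_hasDerivAt x h2

lemma contDiff_pdx {f : ℝ → ℝ → ℝ} (hf : ContDiff ℝ (⊤ : ℕ∞) (uncurry f)) :
    ContDiff ℝ (⊤ : ℕ∞) (uncurry (pdx f)) := by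
  have h : uncurry (pdx f) = fun p : ℝ × ℝ => fderiv ℝ (uncurry f) p ((1 : ℝ), (0 : ℝ)) := by
    funext p
    exact (hasDerivAt_px hf p.1 p.2).deriv
  rw [h]
  exact ((ContinuousLinearMap.apply ℝ ℝ ((1 : ℝ), (0 : ℝ))).contDiff).comp
    (hf.fderiv_right (by simp))

lemma clairaut {f : ℝ → ℝ → ℝ} (hf : ContDiff ℝ (⊤ : ℕ∞) (uncurry f)) (x y : ℝ) :
    pdy (pdx f) x y = pdx (pdy f) x y := by
  have hdF : Differentiable ℝ (uncurry f) := hf.differentiable (by simp)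
  have hF'' : HasFDerivAt (fderiv ℝ (uncurry f))
      (fderiv ℝ (fderiv ℝ (uncurry f)) (x, y)) (x, y) :=
    (((hf.fderiv_right (m := (⊤ : ℕ∞)) (by simp)).differentiable (by simp)) (x, y)).hasFDerivAt
  have hsymm := second_derivative_symmetric (fun p => (hdF p).hasFDerivAt) hF''
    ((1 : ℝ), (0 : ℝ)) ((0 : ℝ), (1 : ℝ))
  have h1 : HasDerivAt (fun t => pdx f x t)
      (fderiv ℝ (fderiv ℝ (uncurry f)) (x, y) ((0 : ℝ), (1 : ℝ)) ((1 : ℝ), (0 : ℝ))) y := by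
    have hg : HasFDerivAt (fun p : ℝ × ℝ => fderiv ℝ (uncurry f) p ((1 : ℝ), (0 : ℝ)))
        ((ContinuousLinearMap.apply ℝ ℝ ((1 : ℝ), (0 : ℝ))).comp
          (fderiv ℝ (fderiv ℝ (uncurry f)) (x, y))) (x, y) :=
      (ContinuousLinearMap.apply ℝ ℝ ((1 : ℝ), (0 : ℝ))).hasFDerivAt.comp (x, y) hF''
    have h2 : HasDerivAt (fun t : ℝ => (x, t)) ((0 : ℝ), (1 : ℝ)) y :=
      (hasDerivAt_const y x).prodMk (hasDerivAt_id y)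
    have h3 := hg.comp_hasDerivAt y h2
    have he : (fun t => pdx f x t) = fun t => fderiv ℝ (uncurry f) (x, t) ((1 : ℝ), (0 : ℝ)) := by
      funext t; exact (hasDerivAt_px hf x t).deriv
    rw [he]; exact h3
  have h1' : HasDerivAt (fun s => pdy f s y)
      (fderiv ℝ (fderiv ℝ (uncurry f)) (x, y) ((1 : ℝ), (0 : ℝ)) ((0 : ℝ), (1 : ℝ))) x := by
    have hg : HasFDerivAt (fun p : ℝ × ℝ => fderiv ℝ (uncurry f) p ((0 : ℝ), (1 : ℝ)))
        ((ContinuousLinearMap.apply ℝ ℝ ((0 : ℝ), (1 : ℝ))).comp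
          (fderiv ℝ (fderiv ℝ (uncurry f)) (x, y))) (x, y) :=
      (ContinuousLinearMap.apply ℝ ℝ ((0 : ℝ), (1 : ℝ))).hasFDerivAt.comp (x, y) hF''
    have h2 : HasDerivAt (fun s : ℝ => (s, y)) ((1 : ℝ), (0 : ℝ)) x :=
      (hasDerivAt_id x).prodMk (hasDerivAt_const x y)
    have h3 := hg.comp_hasDerivAt x h2
    have he : (fun s => pdy f s y) = fun s => fderiv ℝ (uncurry f) (s, y) ((0 : ℝ), (1 : ℝ)) := by
      funext s
      have h4 : HasDerivAt (fun t => f s t) (fderiv ℝ (uncurry f) (s, y) (0, 1)) y := by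
        have hh1 : HasFDerivAt (uncurry f) (fderiv ℝ (uncurry f) (s, y)) (s, y) :=
          (hdF (s, y)).hasFDerivAt
        have hh2 : HasDerivAt (fun t : ℝ => (s, t)) ((0 : ℝ), (1 : ℝ)) y :=
          (hasDerivAt_const y s).prodMk (hasDerivAt_id y)
        exact hh1.comp_hasDerivAt y hh2
      exact h4.deriv
    rw [he]; exact h3
  show deriv (fun t => pdx f x t) y = deriv (fun s => pdy f s y) x
  rw [h1.deriv, h1'.deriv]
  exact hsymm.symm

/-- For smooth solutions of the system `A_{xy} = -(1/8) A e^{-B/4}`,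
`B_{xy} = (1/2) e^{-B/4}`, with momenta `a = B_x/2`, `b = A_x/2`, the
functions `w₁ = -(1/4)a² - a_x` and `w₂ = a b + 2 b_x` satisfy
`∂w₁/∂y = 0` and `∂w₂/∂y = 0`. -/
theorem stmt_4 (A B a b w1 w2 : ℝ → ℝ → ℝ)
    (hA : ContDiff ℝ (⊤ : ℕ∞) (Function.uncurry A))
    (hB : ContDiff ℝ (⊤ : ℕ∞) (Function.uncurry B))
    (heqA : ∀ x y : ℝ, deriv (fun t => deriv (fun s => A s t) x) y
      = -(1/8) * A x y * Real.exp (-(B x y) / 4))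
    (heqB : ∀ x y : ℝ, deriv (fun t => deriv (fun s => B s t) x) y
      = (1/2) * Real.exp (-(B x y) / 4))
    (ha : ∀ x y : ℝ, a x y = deriv (fun s => B s y) x / 2)
    (hb : ∀ x y : ℝ, b x y = deriv (fun s => A s y) x / 2)
    (hw1 : ∀ x y : ℝ, w1 x y = -(1/4) * (a x y) ^ 2 - deriv (fun s => a s y) x)
    (hw2 : ∀ x y : ℝ, w2 x y = a x y * b x y + 2 * deriv (fun s => b s y) x) :
    (∀ x y : ℝ, deriv (fun t => w1 x t) y = 0) ∧
    (∀ x y : ℝ, deriv (fun t => w2 x t) y = 0) := by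
  have hBx : ContDiff ℝ (⊤ : ℕ∞) (uncurry (pdx B)) := contDiff_pdx hB
  have hBxx : ContDiff ℝ (⊤ : ℕ∞) (uncurry (pdx (pdx B))) := contDiff_pdx hBx
  have hAx : ContDiff ℝ (⊤ : ℕ∞) (uncurry (pdx A)) := contDiff_pdx hA
  have hAxx : ContDiff ℝ (⊤ : ℕ∞) (uncurry (pdx (pdx A))) := contDiff_pdx hAx
  have hBxy : ∀ x y : ℝ, pdy (pdx B) x y = (1/2) * Real.exp (-(B x y) / 4) := heqB
  have hAxy : ∀ x y : ℝ, pdy (pdx A) x y = -(1/8) * A x y * Real.exp (-(B x y) / 4) := heqA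
  -- exp factor derivative
  have hexp : ∀ x y : ℝ, HasDerivAt (fun s => Real.exp (-(B s y) / 4))
      (Real.exp (-(B x y) / 4) * (-(pdx B x y) / 4)) x := by
    intro x y
    have hBslice : HasDerivAt (fun s => B s y) (pdx B x y) x :=
      ((slice_x hB y).differentiable (by simp) x).hasDerivAt
    exact (hBslice.neg.div_const 4).exp
  -- third derivative of B
  have hBxxy : ∀ x y : ℝ, pdy (pdx (pdx B)) x y
      = (1/2) * (Real.exp (-(B x y) / 4) * (-(pdx B x y) / 4)) := by
    intro x y
    rw [clairaut hBx x y]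
    have he : (fun s => pdy (pdx B) s y) = fun s => (1/2) * Real.exp (-(B s y) / 4) := by
      funext s; exact hBxy s y
    have h1 : HasDerivAt (fun s => (1/2 : ℝ) * Real.exp (-(B s y) / 4))
        ((1/2) * (Real.exp (-(B x y) / 4) * (-(pdx B x y) / 4))) x :=
      HasDerivAt.const_mul (1/2 : ℝ) (hexp x y)
    show deriv (fun s => pdy (pdx B) s y) x = _
    rw [he, h1.deriv]
  -- third derivative of A
  have hAxxy : ∀ x y : ℝ, pdy (pdx (pdx A)) x y
      = (-(1/8) * pdx A x y) * Real.exp (-(B x y) / 4)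
        + (-(1/8) * A x y) * (Real.exp (-(B x y) / 4) * (-(pdx B x y) / 4)) := by
    intro x y
    rw [clairaut hAx x y]
    have he : (fun s => pdy (pdx A) s y)
        = fun s => (-(1/8 : ℝ) * A s y) * Real.exp (-(B s y) / 4) := by
      funext s
      have := hAxy s y
      rw [this]
    have hAslice : HasDerivAt (fun s => A s y) (pdx A x y) x :=
      ((slice_x hA y).differentiable (by simp) x).hasDerivAt
    have h1 : HasDerivAt (fun s => (-(1/8 : ℝ) * A s y) * Real.exp (-(B s y) / 4))
        ((-(1/8) * pdx A x y) * Real.exp (-(B x y) / 4)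
          + (-(1/8) * A x y) * (Real.exp (-(B x y) / 4) * (-(pdx B x y) / 4))) x :=
      (HasDerivAt.const_mul (-(1/8 : ℝ)) hAslice).mul (hexp x y)
    show deriv (fun s => pdy (pdx A) s y) x = _
    rw [he, h1.deriv]
  have hder_a : ∀ x y : ℝ, deriv (fun s => a s y) x = pdx (pdx B) x y / 2 := by
    intro x y
    have h : (fun s => a s y) = fun s => pdx B s y / 2 := by
      funext s; rw [ha s y]; rfl
    rw [h, deriv_div_const]
    rfl
  have hder_b : ∀ x y : ℝ, deriv (fun s => b s y) x = pdx (pdx A) x y / 2 := by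
    intro x y
    have h : (fun s => b s y) = fun s => pdx A s y / 2 := by
      funext s; rw [hb s y]; rfl
    rw [h, deriv_div_const]
    rfl
  constructor
  · intro x y
    have he : (fun t => w1 x t)
        = fun t => -(1/4 : ℝ) * (pdx B x t / 2) ^ 2 - pdx (pdx B) x t / 2 := by
      funext t
      rw [hw1 x t, ha x t, hder_a x t]
      rfl
    have hBx_y : HasDerivAt (fun t => pdx B x t) (pdy (pdx B) x y) y :=
      ((slice_y hBx x).differentiable (by simp) y).hasDerivAt
    have hBxx_y : HasDerivAt (fun t => pdx (pdx B) x t) (pdy (pdx (pdx B)) x y) y :=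
      ((slice_y hBxx x).differentiable (by simp) y).hasDerivAt
    have hD : HasDerivAt (fun t => -(1/4 : ℝ) * (pdx B x t / 2) ^ 2 - pdx (pdx B) x t / 2)
        (-(1/8) * pdx B x y * pdy (pdx B) x y - pdy (pdx (pdx B)) x y / 2) y := by
      have := (HasDerivAt.const_mul (-(1/4 : ℝ)) ((hBx_y.div_const 2).fun_pow 2)).fun_sub
        (hBxx_y.div_const 2)
      convert this using 1
      · rfl
      · rfl
      push_cast
      ring
    rw [he, hD.deriv, hBxy x y, hBxxy x y]
    ring
  · intro x y
    have he : (fun t => w2 x t)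
        = fun t => (pdx B x t / 2) * (pdx A x t / 2) + 2 * (pdx (pdx A) x t / 2) := by
      funext t
      rw [hw2 x t, ha x t, hb x t, hder_b x t]
      rfl
    have hBx_y : HasDerivAt (fun t => pdx B x t) (pdy (pdx B) x y) y :=
      ((slice_y hBx x).differentiable (by simp) y).hasDerivAt
    have hAx_y : HasDerivAt (fun t => pdx A x t) (pdy (pdx A) x y) y :=
      ((slice_y hAx x).differentiable (by simp) y).hasDerivAt
    have hAxx_y : HasDerivAt (fun t => pdx (pdx A) x t) (pdy (pdx (pdx A)) x y) y :=
      ((slice_y hAxx x).differentiable (by simp) y).hasDerivAt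
    have hD : HasDerivAt
        (fun t => (pdx B x t / 2) * (pdx A x t / 2) + 2 * (pdx (pdx A) x t / 2))
        ((pdy (pdx B) x y / 2) * (pdx A x y / 2) + (pdx B x y / 2) * (pdy (pdx A) x y / 2)
          + 2 * (pdy (pdx (pdx A)) x y / 2)) y := by
      exact ((hBx_y.div_const 2).mul (hAx_y.div_const 2)).add
        (HasDerivAt.const_mul (2 : ℝ) (hAxx_y.div_const 2))
    rw [he, hD.deriv, hBxy x y, hAxy x y, hAxxy x y]
    ring
end

section
/- Let A, B be smooth functions of (x,t) satisfying the potential twice-modified Kaup–Boussinesq equation A_t = (1/2) A_x A_{xx} + (1/2)((1/4) A_x^2 - 1) B_x, B_t = -2 A_{xxx} + (1/8) A_x B_x^2 - (1/2) A_x B_{xx}. With a = B_x/2, b = A_x/2, w_1 = -(1/4)a^2 - a_x, w_2 = a b + 2 b_x, define u = w_2 and v = w_1 + (1/4) w_2^2. Then u and v satisfy the Kaup–Boussinesq system u_t = u u_x + v_x and v_t = (u v)_x + u_{xxx}. -/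
open Function

open Function

/-- Directional partial derivative of a two-variable function. -/
noncomputable def pd (w : ℝ × ℝ) (f : ℝ × ℝ → ℝ) : ℝ × ℝ → ℝ := fun p => fderiv ℝ f p w

lemma contDiff_pd (w : ℝ × ℝ) {f : ℝ × ℝ → ℝ} (hf : ContDiff ℝ (⊤ : ℕ∞) f) :
    ContDiff ℝ (⊤ : ℕ∞) (pd w f) :=
  (hf.fderiv_right (m := (⊤ : ℕ∞)) (by simp)).clm_apply contDiff_const

lemma hasDerivAt_slice_x {f : ℝ × ℝ → ℝ} (hf : ContDiff ℝ (⊤ : ℕ∞) f) (x t : ℝ) :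
    HasDerivAt (fun r => f (r, t)) (pd (1, 0) f (x, t)) x := by
  have h1 : HasDerivAt (fun r : ℝ => (r, t)) (((1 : ℝ), (0 : ℝ))) x :=
    (hasDerivAt_id x).prodMk (hasDerivAt_const x t)
  have h2 := ((hf.differentiable (by simp) (x, t)).hasFDerivAt).comp_hasDerivAt x h1
  exact h2

lemma hasDerivAt_slice_t {f : ℝ × ℝ → ℝ} (hf : ContDiff ℝ (⊤ : ℕ∞) f) (x t : ℝ) :
    HasDerivAt (fun s => f (x, s)) (pd (0, 1) f (x, t)) t := by
  have h1 : HasDerivAt (fun s : ℝ => (x, s)) (((0 : ℝ), (1 : ℝ))) t :=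
    (hasDerivAt_const t x).prodMk (hasDerivAt_id t)
  have h2 := ((hf.differentiable (by simp) (x, t)).hasFDerivAt).comp_hasDerivAt t h1
  exact h2

lemma pd_comm {f : ℝ × ℝ → ℝ} (hf : ContDiff ℝ (⊤ : ℕ∞) f) (p : ℝ × ℝ) :
    pd (1, 0) (pd (0, 1) f) p = pd (0, 1) (pd (1, 0) f) p := by
  have hdf : ∀ q, HasFDerivAt f (fderiv ℝ f q) q := fun q =>
    (hf.differentiable (by simp) q).hasFDerivAt
  have hdf' : DifferentiableAt ℝ (fderiv ℝ f) p :=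
    ((hf.fderiv_right (m := (⊤ : ℕ∞)) (by simp)).differentiable (by simp)) p
  have hsymm := second_derivative_symmetric hdf hdf'.hasFDerivAt (0, 1) (1, 0)
  have key : ∀ w v : ℝ × ℝ, fderiv ℝ (fun q => fderiv ℝ f q v) p w
      = fderiv ℝ (fderiv ℝ f) p w v := by
    intro w v
    rw [fderiv_clm_apply hdf' (differentiableAt_const v)]
    simp
  show fderiv ℝ (fun q => fderiv ℝ f q (0, 1)) p (1, 0)
      = fderiv ℝ (fun q => fderiv ℝ f q (1, 0)) p (0, 1)
  rw [key, key]
  exact hsymm.symm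

lemma hd_congr {f : ℝ → ℝ} {D D' x : ℝ} (h : HasDerivAt f D x) (hD : D' = D) :
    HasDerivAt f D' x := hD ▸ h

lemma slice_x_eq {f : ℝ × ℝ → ℝ} (hf : ContDiff ℝ (⊤ : ℕ∞) f) {g : ℝ × ℝ → ℝ}
    (hfg : ∀ p, f p = g p) {x t D : ℝ} (h : HasDerivAt (fun r => g (r, t)) D x) :
    pd (1, 0) f (x, t) = D :=
  (hasDerivAt_slice_x hf x t).unique
    (h.congr_of_eventuallyEq (Filter.Eventually.of_forall fun r => hfg (r, t)))

lemma iteratedDeriv_slice_two {f : ℝ × ℝ → ℝ} (hf : ContDiff ℝ (⊤ : ℕ∞) f) (x t : ℝ) :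
    iteratedDeriv 2 (fun r => f (r, t)) x = pd (1, 0) (pd (1, 0) f) (x, t) := by
  have e1 : deriv (fun r => f (r, t)) = fun r => pd (1, 0) f (r, t) :=
    funext fun r => (hasDerivAt_slice_x hf r t).deriv
  show iteratedDeriv (1 + 1) (fun r => f (r, t)) x = pd (1, 0) (pd (1, 0) f) (x, t)
  rw [iteratedDeriv_succ', e1, iteratedDeriv_one]
  exact (hasDerivAt_slice_x (contDiff_pd _ hf) x t).deriv

lemma iteratedDeriv_slice_three {f : ℝ × ℝ → ℝ} (hf : ContDiff ℝ (⊤ : ℕ∞) f) (x t : ℝ) :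
    iteratedDeriv 3 (fun r => f (r, t)) x = pd (1, 0) (pd (1, 0) (pd (1, 0) f)) (x, t) := by
  have e1 : deriv (fun r => f (r, t)) = fun r => pd (1, 0) f (r, t) :=
    funext fun r => (hasDerivAt_slice_x hf r t).deriv
  show iteratedDeriv (2 + 1) (fun r => f (r, t)) x = _
  rw [iteratedDeriv_succ', e1]
  exact iteratedDeriv_slice_two (contDiff_pd _ hf) x t

lemma iteratedDeriv_three_eq {g g1 g2 : ℝ → ℝ} {x D : ℝ}
    (h1 : ∀ r, HasDerivAt g (g1 r) r) (h2 : ∀ r, HasDerivAt g1 (g2 r) r)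
    (h3 : HasDerivAt g2 D x) :
    iteratedDeriv 3 g x = D := by
  have e1 : deriv g = g1 := funext fun r => (h1 r).deriv
  have e2 : deriv g1 = g2 := funext fun r => (h2 r).deriv
  show iteratedDeriv (2 + 1) g x = D
  rw [iteratedDeriv_succ', e1]
  show iteratedDeriv (1 + 1) g1 x = D
  rw [iteratedDeriv_succ', e2, iteratedDeriv_one]
  exact h3.deriv

/-- The substitution `u = w₂`, `v = w₁ + (1/4) w₂²`, built from the momenta
`a = B_x/2`, `b = A_x/2` and integrals `w₁ = -(1/4)a² - a_x`, `w₂ = ab + 2b_x`,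
maps smooth solutions of the potential twice-modified Kaup–Boussinesq equation
`A_t = (1/2) A_x A_{xx} + (1/2)((1/4)A_x² - 1) B_x`,
`B_t = -2 A_{xxx} + (1/8) A_x B_x² - (1/2) A_x B_{xx}`
to solutions of the Kaup–Boussinesq system
`u_t = u u_x + v_x`, `v_t = (uv)_x + u_{xxx}`. -/
theorem stmt_5 (A B a b w1 w2 u v : ℝ → ℝ → ℝ)
    (hA : ContDiff ℝ (⊤ : ℕ∞) (Function.uncurry A))
    (hB : ContDiff ℝ (⊤ : ℕ∞) (Function.uncurry B))
    (heqA : ∀ x t : ℝ, deriv (fun s => A x s) t =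
      (1/2) * deriv (fun r => A r t) x * iteratedDeriv 2 (fun r => A r t) x
        + (1/2) * ((1/4) * (deriv (fun r => A r t) x) ^ 2 - 1) * deriv (fun r => B r t) x)
    (heqB : ∀ x t : ℝ, deriv (fun s => B x s) t =
      -2 * iteratedDeriv 3 (fun r => A r t) x
        + (1/8) * deriv (fun r => A r t) x * (deriv (fun r => B r t) x) ^ 2
        - (1/2) * deriv (fun r => A r t) x * iteratedDeriv 2 (fun r => B r t) x)
    (ha : ∀ x t : ℝ, a x t = deriv (fun r => B r t) x / 2)
    (hb : ∀ x t : ℝ, b x t = deriv (fun r => A r t) x / 2)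
    (hw1 : ∀ x t : ℝ, w1 x t = -(1/4) * (a x t) ^ 2 - deriv (fun r => a r t) x)
    (hw2 : ∀ x t : ℝ, w2 x t = a x t * b x t + 2 * deriv (fun r => b r t) x)
    (hu : ∀ x t : ℝ, u x t = w2 x t)
    (hv : ∀ x t : ℝ, v x t = w1 x t + (1/4) * (w2 x t) ^ 2) :
    (∀ x t : ℝ, deriv (fun s => u x s) t =
        u x t * deriv (fun r => u r t) x + deriv (fun r => v r t) x) ∧
    (∀ x t : ℝ, deriv (fun s => v x s) t =
        deriv (fun r => u r t * v r t) x + iteratedDeriv 3 (fun r => u r t) x) := by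
  -- x-derivative atoms
  set P1 : ℝ × ℝ → ℝ := pd (1, 0) (Function.uncurry A) with hP1def
  set P2 : ℝ × ℝ → ℝ := pd (1, 0) P1 with hP2def
  set P3 : ℝ × ℝ → ℝ := pd (1, 0) P2 with hP3def
  set P4 : ℝ × ℝ → ℝ := pd (1, 0) P3 with hP4def
  set P5 : ℝ × ℝ → ℝ := pd (1, 0) P4 with hP5def
  set Q1 : ℝ × ℝ → ℝ := pd (1, 0) (Function.uncurry B) with hQ1def
  set Q2 : ℝ × ℝ → ℝ := pd (1, 0) Q1 with hQ2def
  set Q3 : ℝ × ℝ → ℝ := pd (1, 0) Q2 with hQ3def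
  set Q4 : ℝ × ℝ → ℝ := pd (1, 0) Q3 with hQ4def
  set PT : ℝ × ℝ → ℝ := pd (0, 1) (Function.uncurry A) with hPTdef
  set QT : ℝ × ℝ → ℝ := pd (0, 1) (Function.uncurry B) with hQTdef
  -- smoothness
  have cP1 : ContDiff ℝ (⊤ : ℕ∞) P1 := contDiff_pd _ hA
  have cP2 : ContDiff ℝ (⊤ : ℕ∞) P2 := contDiff_pd _ cP1
  have cP3 : ContDiff ℝ (⊤ : ℕ∞) P3 := contDiff_pd _ cP2
  have cP4 : ContDiff ℝ (⊤ : ℕ∞) P4 := contDiff_pd _ cP3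
  have cQ1 : ContDiff ℝ (⊤ : ℕ∞) Q1 := contDiff_pd _ hB
  have cQ2 : ContDiff ℝ (⊤ : ℕ∞) Q2 := contDiff_pd _ cQ1
  have cQ3 : ContDiff ℝ (⊤ : ℕ∞) Q3 := contDiff_pd _ cQ2
  have cPT : ContDiff ℝ (⊤ : ℕ∞) PT := contDiff_pd _ hA
  have cQT : ContDiff ℝ (⊤ : ℕ∞) QT := contDiff_pd _ hB
  -- slice HasDerivAt blocks (x-direction)
  have dP1 : ∀ x t : ℝ, HasDerivAt (fun r => P1 (r, t)) (P2 (x, t)) x :=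
    fun x t => hasDerivAt_slice_x cP1 x t
  have dP2 : ∀ x t : ℝ, HasDerivAt (fun r => P2 (r, t)) (P3 (x, t)) x :=
    fun x t => hasDerivAt_slice_x cP2 x t
  have dP3 : ∀ x t : ℝ, HasDerivAt (fun r => P3 (r, t)) (P4 (x, t)) x :=
    fun x t => hasDerivAt_slice_x cP3 x t
  have dP4 : ∀ x t : ℝ, HasDerivAt (fun r => P4 (r, t)) (P5 (x, t)) x :=
    fun x t => hasDerivAt_slice_x cP4 x t
  have dQ1 : ∀ x t : ℝ, HasDerivAt (fun r => Q1 (r, t)) (Q2 (x, t)) x :=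
    fun x t => hasDerivAt_slice_x cQ1 x t
  have dQ2 : ∀ x t : ℝ, HasDerivAt (fun r => Q2 (r, t)) (Q3 (x, t)) x :=
    fun x t => hasDerivAt_slice_x cQ2 x t
  have dQ3 : ∀ x t : ℝ, HasDerivAt (fun r => Q3 (r, t)) (Q4 (x, t)) x :=
    fun x t => hasDerivAt_slice_x cQ3 x t
  -- slice HasDerivAt blocks (t-direction)
  have tP1 : ∀ x t : ℝ, HasDerivAt (fun s => P1 (x, s)) (pd (0, 1) P1 (x, t)) t :=
    fun x t => hasDerivAt_slice_t cP1 x t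
  have tP2 : ∀ x t : ℝ, HasDerivAt (fun s => P2 (x, s)) (pd (0, 1) P2 (x, t)) t :=
    fun x t => hasDerivAt_slice_t cP2 x t
  have tQ1 : ∀ x t : ℝ, HasDerivAt (fun s => Q1 (x, s)) (pd (0, 1) Q1 (x, t)) t :=
    fun x t => hasDerivAt_slice_t cQ1 x t
  have tQ2 : ∀ x t : ℝ, HasDerivAt (fun s => Q2 (x, s)) (pd (0, 1) Q2 (x, t)) t :=
    fun x t => hasDerivAt_slice_t cQ2 x t
  -- translations of one-variable derivatives
  have hP1d : ∀ x t : ℝ, deriv (fun r => A r t) x = P1 (x, t) :=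
    fun x t => (hasDerivAt_slice_x hA x t).deriv
  have hQ1d : ∀ x t : ℝ, deriv (fun r => B r t) x = Q1 (x, t) :=
    fun x t => (hasDerivAt_slice_x hB x t).deriv
  have hP2it : ∀ x t : ℝ, iteratedDeriv 2 (fun r => A r t) x = P2 (x, t) :=
    fun x t => iteratedDeriv_slice_two hA x t
  have hP3it : ∀ x t : ℝ, iteratedDeriv 3 (fun r => A r t) x = P3 (x, t) :=
    fun x t => iteratedDeriv_slice_three hA x t
  have hQ2it : ∀ x t : ℝ, iteratedDeriv 2 (fun r => B r t) x = Q2 (x, t) :=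
    fun x t => iteratedDeriv_slice_two hB x t
  -- the PDE hypotheses, in atoms
  have hPT : ∀ p : ℝ × ℝ, PT p =
      (1/2) * P1 p * P2 p + (1/2) * ((1/4) * (P1 p) ^ 2 - 1) * Q1 p := by
    rintro ⟨x, t⟩
    have h := heqA x t
    rw [hP1d x t, hP2it x t, hQ1d x t] at h
    exact (((hasDerivAt_slice_t hA x t).deriv).symm).trans h
  have hQT : ∀ p : ℝ × ℝ, QT p =
      -2 * P3 p + (1/8) * P1 p * (Q1 p) ^ 2 - (1/2) * P1 p * Q2 p := by
    rintro ⟨x, t⟩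
    have h := heqB x t
    rw [hP1d x t, hP3it x t, hQ1d x t, hQ2it x t] at h
    exact (((hasDerivAt_slice_t hB x t).deriv).symm).trans h
  -- x-derivatives of PT, QT
  have ePT1 : ∀ p : ℝ × ℝ, pd (1, 0) PT p =
      (1/2) * P2 p * P2 p + (1/2) * P1 p * P3 p + (1/4) * P1 p * P2 p * Q1 p
        + (1/8) * P1 p * P1 p * Q2 p - (1/2) * Q2 p := by
    rintro ⟨x, t⟩
    have ch := (((dP1 x t).const_mul ((1:ℝ)/2)).mul (dP2 x t)).add
      ((((((dP1 x t).pow 2).const_mul ((1:ℝ)/4)).sub_const 1).const_mul ((1:ℝ)/2)).mul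
        (dQ1 x t))
    refine slice_x_eq cPT hPT (hd_congr ch ?_)
    simp only [show (2 - 1 : ℕ) = 1 from rfl, pow_one, Pi.mul_apply, Pi.pow_apply]
    ring
  have ePT2 : ∀ p : ℝ × ℝ, pd (1, 0) (pd (1, 0) PT) p =
      (3/2) * P2 p * P3 p + (1/4) * P2 p * P2 p * Q1 p + (1/2) * P1 p * P4 p
        + (1/4) * P1 p * P3 p * Q1 p + (1/2) * P1 p * P2 p * Q2 p
        + (1/8) * P1 p * P1 p * Q3 p - (1/2) * Q3 p := by
    rintro ⟨x, t⟩
    have ch := ((((((dP2 x t).const_mul ((1:ℝ)/2)).mul (dP2 x t)).add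
        (((dP1 x t).const_mul ((1:ℝ)/2)).mul (dP3 x t))).add
        ((((dP1 x t).const_mul ((1:ℝ)/4)).mul (dP2 x t)).mul (dQ1 x t))).add
        ((((dP1 x t).const_mul ((1:ℝ)/8)).mul (dP1 x t)).mul (dQ2 x t))).sub
        ((dQ2 x t).const_mul ((1:ℝ)/2))
    refine slice_x_eq (contDiff_pd _ cPT) ePT1 (hd_congr ch ?_)
    simp only [Pi.mul_apply]
    ring
  have eQT1 : ∀ p : ℝ × ℝ, pd (1, 0) QT p =
      (1/8) * P2 p * Q1 p * Q1 p + (1/4) * P1 p * Q1 p * Q2 p - 2 * P4 p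
        - (1/2) * P2 p * Q2 p - (1/2) * P1 p * Q3 p := by
    rintro ⟨x, t⟩
    have ch := (((dP3 x t).const_mul (-2 : ℝ)).add
      (((dP1 x t).const_mul ((1:ℝ)/8)).mul ((dQ1 x t).pow 2))).sub
      (((dP1 x t).const_mul ((1:ℝ)/2)).mul (dQ2 x t))
    refine slice_x_eq cQT hQT (hd_congr ch ?_)
    simp only [show (2 - 1 : ℕ) = 1 from rfl, pow_one, Pi.mul_apply, Pi.pow_apply]
    ring
  have eQT2 : ∀ p : ℝ × ℝ, pd (1, 0) (pd (1, 0) QT) p =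
      (1/8) * P3 p * Q1 p * Q1 p + (1/2) * P2 p * Q1 p * Q2 p
        + (1/4) * P1 p * Q2 p * Q2 p + (1/4) * P1 p * Q1 p * Q3 p - 2 * P5 p
        - (1/2) * P3 p * Q2 p - P2 p * Q3 p - (1/2) * P1 p * Q4 p := by
    rintro ⟨x, t⟩
    have ch := (((((((dP2 x t).const_mul ((1:ℝ)/8)).mul (dQ1 x t)).mul (dQ1 x t)).add
        ((((dP1 x t).const_mul ((1:ℝ)/4)).mul (dQ1 x t)).mul (dQ2 x t))).sub
        ((dP4 x t).const_mul (2 : ℝ))).sub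
        (((dP2 x t).const_mul ((1:ℝ)/2)).mul (dQ2 x t))).sub
        (((dP1 x t).const_mul ((1:ℝ)/2)).mul (dQ3 x t))
    refine slice_x_eq (contDiff_pd _ cQT) eQT1 (hd_congr ch ?_)
    simp only [Pi.mul_apply]
    ring
  -- t-derivatives of the atoms, via Clairaut
  have etP1 : ∀ p : ℝ × ℝ, pd (0, 1) P1 p =
      (1/2) * P2 p * P2 p + (1/2) * P1 p * P3 p + (1/4) * P1 p * P2 p * Q1 p
        + (1/8) * P1 p * P1 p * Q2 p - (1/2) * Q2 p :=
    fun p => ((pd_comm hA p).symm).trans (ePT1 p)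
  have etP2 : ∀ p : ℝ × ℝ, pd (0, 1) P2 p =
      (3/2) * P2 p * P3 p + (1/4) * P2 p * P2 p * Q1 p + (1/2) * P1 p * P4 p
        + (1/4) * P1 p * P3 p * Q1 p + (1/2) * P1 p * P2 p * Q2 p
        + (1/8) * P1 p * P1 p * Q3 p - (1/2) * Q3 p := by
    intro p
    have h1 : pd (0, 1) P2 p = pd (1, 0) (pd (0, 1) P1) p := (pd_comm cP1 p).symm
    have h2 : pd (0, 1) P1 = pd (1, 0) PT := funext fun q => (pd_comm hA q).symm
    rw [h1, h2]
    exact ePT2 p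
  have etQ1 : ∀ p : ℝ × ℝ, pd (0, 1) Q1 p =
      (1/8) * P2 p * Q1 p * Q1 p + (1/4) * P1 p * Q1 p * Q2 p - 2 * P4 p
        - (1/2) * P2 p * Q2 p - (1/2) * P1 p * Q3 p :=
    fun p => ((pd_comm hB p).symm).trans (eQT1 p)
  have etQ2 : ∀ p : ℝ × ℝ, pd (0, 1) Q2 p =
      (1/8) * P3 p * Q1 p * Q1 p + (1/2) * P2 p * Q1 p * Q2 p
        + (1/4) * P1 p * Q2 p * Q2 p + (1/4) * P1 p * Q1 p * Q3 p - 2 * P5 p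
        - (1/2) * P3 p * Q2 p - P2 p * Q3 p - (1/2) * P1 p * Q4 p := by
    intro p
    have h1 : pd (0, 1) Q2 p = pd (1, 0) (pd (0, 1) Q1) p := (pd_comm cQ1 p).symm
    have h2 : pd (0, 1) Q1 = pd (1, 0) QT := funext fun q => (pd_comm hB q).symm
    rw [h1, h2]
    exact eQT2 p
  -- the substitution, in atoms
  have hafun : ∀ x t : ℝ, a x t = Q1 (x, t) / 2 := by
    intro x t; rw [ha, hQ1d]
  have hbfun : ∀ x t : ℝ, b x t = P1 (x, t) / 2 := by
    intro x t; rw [hb, hP1d]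
  have haderiv : ∀ x t : ℝ, deriv (fun r => a r t) x = Q2 (x, t) / 2 :=
    fun x t => (((dQ1 x t).div_const 2).congr_of_eventuallyEq
      (Filter.Eventually.of_forall fun r => hafun r t)).deriv
  have hbderiv : ∀ x t : ℝ, deriv (fun r => b r t) x = P2 (x, t) / 2 :=
    fun x t => (((dP1 x t).div_const 2).congr_of_eventuallyEq
      (Filter.Eventually.of_forall fun r => hbfun r t)).deriv
  have hufun : ∀ x t : ℝ, u x t = (1/4) * (Q1 (x, t) * P1 (x, t)) + P2 (x, t) := by
    intro x t
    rw [hu, hw2, hafun, hbfun, hbderiv]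
    ring
  have hvfun : ∀ x t : ℝ, v x t = (-1/16) * (Q1 (x, t)) ^ 2 + (-1/2) * Q2 (x, t)
      + (1/4) * ((1/4) * (Q1 (x, t) * P1 (x, t)) + P2 (x, t)) ^ 2 := by
    intro x t
    rw [hv, hw1, hw2, hafun, hbfun, haderiv, hbderiv]
    ring
  constructor
  · -- first Kaup–Boussinesq equation
    intro x t
    have hL := (((((tQ1 x t).mul (tP1 x t)).const_mul ((1:ℝ)/4)).add (tP2 x t)).congr_of_eventuallyEq
      (Filter.Eventually.of_forall fun s => hufun x s)).deriv
    have hRu := (((((dQ1 x t).mul (dP1 x t)).const_mul ((1:ℝ)/4)).add (dP2 x t)).congr_of_eventuallyEq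
      (Filter.Eventually.of_forall fun r => hufun r t)).deriv
    have chVx := ((((dQ1 x t).pow 2).const_mul ((-1:ℝ)/16)).add
        ((dQ2 x t).const_mul ((-1:ℝ)/2))).add
      ((((((dQ1 x t).mul (dP1 x t)).const_mul ((1:ℝ)/4)).add (dP2 x t)).pow 2).const_mul
        ((1:ℝ)/4))
    have hRv := (chVx.congr_of_eventuallyEq
      (Filter.Eventually.of_forall fun r => hvfun r t)).deriv
    rw [hL, hRu, hRv, hufun x t, etP1 (x, t), etP2 (x, t), etQ1 (x, t)]
    simp only [show (2 - 1 : ℕ) = 1 from rfl, pow_one, Pi.mul_apply, Pi.pow_apply, Pi.add_apply]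
    ring
  · -- second Kaup–Boussinesq equation
    intro x t
    have chVt := ((((tQ1 x t).pow 2).const_mul ((-1:ℝ)/16)).add
        ((tQ2 x t).const_mul ((-1:ℝ)/2))).add
      ((((((tQ1 x t).mul (tP1 x t)).const_mul ((1:ℝ)/4)).add (tP2 x t)).pow 2).const_mul
        ((1:ℝ)/4))
    have hL := (chVt.congr_of_eventuallyEq
      (Filter.Eventually.of_forall fun s => hvfun x s)).deriv
    have chUx := ((((dQ1 x t).mul (dP1 x t)).const_mul ((1:ℝ)/4)).add (dP2 x t))
    have chVx := ((((dQ1 x t).pow 2).const_mul ((-1:ℝ)/16)).add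
        ((dQ2 x t).const_mul ((-1:ℝ)/2))).add
      ((((((dQ1 x t).mul (dP1 x t)).const_mul ((1:ℝ)/4)).add (dP2 x t)).pow 2).const_mul
        ((1:ℝ)/4))
    have huv : ∀ r : ℝ, u r t * v r t =
        ((1/4) * (Q1 (r, t) * P1 (r, t)) + P2 (r, t)) *
          ((-1/16) * (Q1 (r, t)) ^ 2 + (-1/2) * Q2 (r, t)
            + (1/4) * ((1/4) * (Q1 (r, t) * P1 (r, t)) + P2 (r, t)) ^ 2) := by
      intro r
      rw [hufun, hvfun]
    have hR1 := ((chUx.mul chVx).congr_of_eventuallyEq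
      (Filter.Eventually.of_forall huv)).deriv
    have h1 : ∀ r : ℝ, HasDerivAt (fun r' => u r' t)
        ((1/4) * (Q2 (r, t) * P1 (r, t) + Q1 (r, t) * P2 (r, t)) + P3 (r, t)) r :=
      fun r => ((((dQ1 r t).mul (dP1 r t)).const_mul ((1:ℝ)/4)).add (dP2 r t)).congr_of_eventuallyEq
        (Filter.Eventually.of_forall fun r' => hufun r' t)
    have h2 : ∀ r : ℝ, HasDerivAt
        (fun r' => (1/4) * (Q2 (r', t) * P1 (r', t) + Q1 (r', t) * P2 (r', t)) + P3 (r', t))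
        ((1/4) * ((Q3 (r, t) * P1 (r, t) + Q2 (r, t) * P2 (r, t))
          + (Q2 (r, t) * P2 (r, t) + Q1 (r, t) * P3 (r, t))) + P4 (r, t)) r :=
      fun r => ((((dQ2 r t).mul (dP1 r t)).add ((dQ1 r t).mul (dP2 r t))).const_mul
        ((1:ℝ)/4)).add (dP3 r t)
    have h3 := (((((dQ3 x t).mul (dP1 x t)).add ((dQ2 x t).mul (dP2 x t))).add
        (((dQ2 x t).mul (dP2 x t)).add ((dQ1 x t).mul (dP3 x t)))).const_mul
        ((1:ℝ)/4)).add (dP4 x t)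
    have hR2 := iteratedDeriv_three_eq h1 h2 h3
    rw [hL, hR1, hR2, etP1 (x, t), etP2 (x, t), etQ1 (x, t), etQ2 (x, t)]
    simp only [show (2 - 1 : ℕ) = 1 from rfl, pow_one, Pi.mul_apply, Pi.pow_apply, Pi.add_apply]
    ring
end
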